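/- If a clause C has RAT on a literal x ∈ C with respect to a CNF formula F, then the addition of C to F is sat-preserving; that is, if F is satisfiable then F ∪ {C} is satisfiable. -/
import Mathlib


/-- The negation of a literal. -/
def negLit {V : Type*} (l : V × Bool) : V × Bool := (l.1, !l.2)

/-- An assignment satisfies a literal. -/
def SatLit {V : Type*} (τ : V → Bool) (l : V × Bool) : Prop := τ l.1 = l.2

/-- An assignment satisfies a clause iff it satisfies some literal of it. -/
def SatClause {V : Type*} (τ : V → Bool) (C : Finset (V × Bool)) : Prop :=
  ∃ l ∈ C, SatLit τ l

/-- An assignment satisfies a formula iff it satisfies every clause of it. -/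
def SatFormula {V : Type*} (τ : V → Bool) (F : Finset (Finset (V × Bool))) : Prop :=
  ∀ C ∈ F, SatClause τ C

/-- A formula is satisfiable. -/
def Satisfiable {V : Type*} (F : Finset (Finset (V × Bool))) : Prop :=
  ∃ τ, SatFormula τ F

/-- Logical implication of a clause by a formula. -/
def Implies {V : Type*} (F : Finset (Finset (V × Bool))) (C : Finset (V × Bool)) : Prop :=
  ∀ τ, SatFormula τ F → SatClause τ C

/-- A literal `l` is unit-derivable from `F` if some clause `D ∈ F` contains `l`
and the negation of every other literal of `D` is unit-derivable from `F`. -/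
inductive UnitDeriv {V : Type*} : Finset (Finset (V × Bool)) → (V × Bool) → Prop
  | intro (F : Finset (Finset (V × Bool))) (l : V × Bool) (D : Finset (V × Bool))
      (hD : D ∈ F) (hl : l ∈ D)
      (h : ∀ m ∈ D, m ≠ l → UnitDeriv F (negLit m)) : UnitDeriv F l

/-- Unit propagation derives a conflict from `F` (written `F ⊢₁ ⊥`): the empty
clause is in `F`, or some literal and its negation are both unit-derivable. -/
def UPConflict {V : Type*} (F : Finset (Finset (V × Bool))) : Prop :=
  (∅ : Finset (V × Bool)) ∈ F ∨ ∃ l, UnitDeriv F l ∧ UnitDeriv F (negLit l)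

/-- The formula `¬C`: one unit clause negating each literal of the clause `C`. -/
def negCNF {V : Type*} [DecidableEq V] (C : Finset (V × Bool)) :
    Finset (Finset (V × Bool)) :=
  C.image (fun l => {negLit l})

lemma unitDeriv_sound {V : Type*} {F : Finset (Finset (V × Bool))} {τ : V → Bool}
    (hF : SatFormula τ F) {l : V × Bool} (h : UnitDeriv F l) : SatLit τ l := by
  induction h with
  | intro l D hD hl h ih =>
    obtain ⟨m, hm, hsm⟩ := hF D hD
    by_cases hml : m = l
    · exact hml ▸ hsm
    · have h2 := ih m hm hml
      simp only [SatLit, negLit] at h2 hsm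
      rw [hsm] at h2
      simp at h2

lemma upConflict_sound {V : Type*} {F : Finset (Finset (V × Bool))} {τ : V → Bool}
    (hF : SatFormula τ F) (h : UPConflict F) : False := by
  rcases h with h | ⟨l, h1, h2⟩
  · obtain ⟨m, hm, _⟩ := hF _ h
    exact absurd hm (Finset.notMem_empty m)
  · have s1 := unitDeriv_sound hF h1
    have s2 := unitDeriv_sound hF h2
    simp only [SatLit, negLit] at s1 s2
    rw [s1] at s2; simp at s2

/-- If `C` has RAT on a literal `x ∈ C` with respect to `F` (i.e., for every
clause `D ∈ F` containing `¬x`, unit propagation derives a conflict from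
`F ∧ ¬(C ∪ (D \ {¬x}))`), then adding `C` to `F` is sat-preserving. -/
theorem rat_addition_sat_preserving {V : Type*} [DecidableEq V]
    (F : Finset (Finset (V × Bool))) (C : Finset (V × Bool)) (x : V × Bool)
    (hx : x ∈ C)
    (hrat : ∀ D ∈ F, negLit x ∈ D → UPConflict (F ∪ negCNF (C ∪ (D \ {negLit x}))))
    (hsat : Satisfiable F) :
    Satisfiable (insert C F) := by
  obtain ⟨τ, hτ⟩ := hsat
  by_cases hC : SatClause τ C
  · exact ⟨τ, fun D hD => by
      rcases Finset.mem_insert.mp hD with rfl | hD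
      · exact hC
      · exact hτ D hD⟩
  -- τ falsifies every literal of C
  have hfalse : ∀ l ∈ C, τ l.1 = !l.2 := by
    intro l hl
    have h1 : ¬ SatLit τ l := fun hs => hC ⟨l, hl, hs⟩
    simp only [SatLit] at h1
    revert h1; cases τ l.1 <;> cases l.2 <;> simp
  -- flipped assignment
  set τ' : V → Bool := fun v => if v = x.1 then x.2 else τ v with hτ'def
  have hτ'x : τ' x.1 = x.2 := by simp [hτ'def]
  have hτ'ne : ∀ v, v ≠ x.1 → τ' v = τ v := by intro v hv; simp [hτ'def, hv]
  refine ⟨τ', fun D hD => ?_⟩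
  rcases Finset.mem_insert.mp hD with rfl | hD
  · exact ⟨x, hx, hτ'x⟩
  by_cases hnx : negLit x ∈ D
  · -- use the RAT property
    have hup := hrat D hD hnx
    -- τ must satisfy some literal in D \ {negLit x}
    by_cases hsome : ∃ m ∈ D \ {negLit x}, SatLit τ m
    · obtain ⟨m, hm, hsm⟩ := hsome
      obtain ⟨hmD, hmne⟩ := Finset.mem_sdiff.mp hm
      have hmne' : m ≠ negLit x := by simpa using hmne
      have hm1 : m.1 ≠ x.1 := by
        intro h1
        simp only [SatLit] at hsm
        have hxf : τ x.1 = !x.2 := hfalse x hx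
        rw [h1, hxf] at hsm
        apply hmne'
        have : m = (m.1, m.2) := rfl
        rw [this, h1, ← hsm]; rfl
      exact ⟨m, hmD, by rw [SatLit, hτ'ne m.1 hm1]; exact hsm⟩
    · exfalso
      push_neg at hsome
      apply upConflict_sound (τ := τ) ?_ hup
      intro E hE
      rcases Finset.mem_union.mp hE with hE | hE
      · exact hτ E hE
      · obtain ⟨l, hl, rfl⟩ := Finset.mem_image.mp hE
        refine ⟨negLit l, Finset.mem_singleton_self _, ?_⟩
        rcases Finset.mem_union.mp hl with hl | hl
        · simpa [SatLit, negLit] using hfalse l hl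
        · have h1 := hsome l hl
          simp only [SatLit, negLit] at h1 ⊢
          revert h1; cases τ l.1 <;> cases l.2 <;> simp
  · -- negLit x ∉ D : the witness for τ works for τ'
    obtain ⟨m, hm, hsm⟩ := hτ D hD
    have hm1 : m.1 ≠ x.1 := by
      intro h1
      simp only [SatLit] at hsm
      have hxf : τ x.1 = !x.2 := hfalse x hx
      rw [h1, hxf] at hsm
      apply hnx
      have : m = (m.1, m.2) := rfl
      rw [this, h1, ← hsm] at hm
      exact hm
    exact ⟨m, hm, by rw [SatLit, hτ'ne m.1 hm1]; exact hsm⟩
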